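/- arXiv:2303.11974 — 3 statements merged into one kernel-verified Lean document; each statement's English description precedes it below -/
import Mathlib

section
/- There do not exist odd primes a, b, c, d, e, f, g satisfying a² + a + 1 = 3·d·e, b² + b + 1 = 3·d·f, c² + c + 1 = d·g, d ≥ e, d ≥ f, d ≥ g, and e ≠ f. -/
/-!
Modulo the prime `d`, the numbers `a`, `b`, `c` are roots of `X² + X + 1`, which has at most two
roots, so two of them are congruent. Since `e, f, g ≤ d`, we have `a, b < 2d` and `c < d`, so
congruent ones are equal or differ by exactly `d`. Modulo `3` we have `a ≡ b ≡ 1`, and also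
`d ≡ 1`: `d ≠ 3` as `9 ∤ x² + x + 1`, so `a` is a cube root of unity of order `3` modulo `d`.
Hence `a ≡ b (mod d)` forces `a = b`, i.e. `e = f`; `a = c` makes `g = 3e` prime; and
`a = c + d` gives `3 ∣ c`, so `c = 3` and `d·g = 13`.
-/

theorem not_nine_dvd_sq_add_add_one (x : ℕ) : ¬ 9 ∣ x ^ 2 + x + 1 := by
  rw [← ZMod.natCast_eq_zero_iff]
  push_cast
  generalize (x : ZMod 9) = y
  revert y
  decide

theorem mod_three_eq_one_of_three_dvd_sq_add_add_one {x : ℕ} (h : 3 ∣ x ^ 2 + x + 1) :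
    x % 3 = 1 := by
  rw [← ZMod.natCast_eq_zero_iff] at h
  push_cast at h
  change x ≡ 1 [MOD 3]
  rw [← ZMod.natCast_eq_natCast_iff]
  generalize (x : ZMod 3) = y at h ⊢
  revert y
  decide

theorem Nat.Prime.eq_three_or_mod_three_eq_one_of_dvd_sq_add_add_one {p x : ℕ} (hp : p.Prime)
    (h : p ∣ x ^ 2 + x + 1) : p = 3 ∨ p % 3 = 1 := by
  have := Fact.mk hp
  rw [← ZMod.natCast_eq_zero_iff] at h
  push_cast at h
  by_cases hx1 : (x : ZMod p) = 1
  · rw [hx1] at h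
    have h3 : ((3 : ℕ) : ZMod p) = 0 := by push_cast; linear_combination h
    rw [ZMod.natCast_eq_zero_iff] at h3
    exact .inl ((Nat.prime_dvd_prime_iff_eq hp Nat.prime_three).mp h3)
  · have hx0 : (x : ZMod p) ≠ 0 := by
      rintro hx0
      simp [hx0] at h
    have hcube : (x : ZMod p) ^ 3 = 1 := by linear_combination ((x : ZMod p) - 1) * h
    have := Fact.mk Nat.prime_three
    have horder : orderOf (x : ZMod p) = 3 := orderOf_eq_prime hcube hx1
    have hdvd := ZMod.orderOf_dvd_card_sub_one hx0
    rw [horder] at hdvd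
    have := hp.two_le
    omega

theorem eq_or_eq_or_eq_of_sq_add_add_one_eq_zero {R : Type*} [CommRing R] [IsDomain R]
    {x y z : R} (hx : x ^ 2 + x + 1 = 0) (hy : y ^ 2 + y + 1 = 0) (hz : z ^ 2 + z + 1 = 0) :
    x = y ∨ x = z ∨ y = z := by
  have hxy : (x - y) * (x + y + 1) = 0 := by linear_combination hx - hy
  have hxz : (x - z) * (x + z + 1) = 0 := by linear_combination hx - hz
  rcases mul_eq_zero.mp hxy with hxy | hxy
  · exact .inl (sub_eq_zero.mp hxy)
  rcases mul_eq_zero.mp hxz with hxz | hxz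
  · exact .inr (.inl (sub_eq_zero.mp hxz))
  · exact .inr (.inr (by linear_combination hxy - hxz))

theorem Nat.Prime.modEq_or_modEq_or_modEq_of_dvd_sq_add_add_one {p x y z : ℕ} (hp : p.Prime)
    (hx : p ∣ x ^ 2 + x + 1) (hy : p ∣ y ^ 2 + y + 1) (hz : p ∣ z ^ 2 + z + 1) :
    x ≡ y [MOD p] ∨ x ≡ z [MOD p] ∨ y ≡ z [MOD p] := by
  have := Fact.mk hp
  simp only [← ZMod.natCast_eq_natCast_iff]
  rw [← ZMod.natCast_eq_zero_iff] at hx hy hz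
  push_cast at hx hy hz
  exact eq_or_eq_or_eq_of_sq_add_add_one_eq_zero hx hy hz

theorem Nat.eq_or_eq_add_or_eq_add_of_modEq {x y d : ℕ} (h : x ≡ y [MOD d]) (hx : x < 2 * d)
    (hy : y < 2 * d) : x = y ∨ x = y + d ∨ y = x + d := by
  have hx' := Nat.div_add_mod x d
  have hy' := Nat.div_add_mod y d
  have hxd : x / d < 2 := Nat.div_lt_of_lt_mul (by linarith)
  have hyd : y / d < 2 := Nat.div_lt_of_lt_mul (by linarith)
  unfold Nat.ModEq at h
  interval_cases x / d <;> interval_cases y / d <;> omega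

theorem lt_two_mul_of_sq_add_add_one_eq {x d k : ℕ} (h : x ^ 2 + x + 1 = 3 * d * k)
    (hk : k ≤ d) : x < 2 * d := by
  nlinarith

theorem lt_of_sq_add_add_one_eq {x d k : ℕ} (h : x ^ 2 + x + 1 = d * k) (hk : k ≤ d) :
    x < d := by
  nlinarith

theorem not_modEq_of_sq_add_add_one_eq {x k c d g : ℕ} (hc : c.Prime) (hg : g.Prime)
    (hk : k ≠ 1) (hx3 : x % 3 = 1) (hd3 : d % 3 = 1) (hxd : x < 2 * d) (hcd : c < d)
    (hxk : x ^ 2 + x + 1 = 3 * d * k) (hcg : c ^ 2 + c + 1 = d * g) : ¬ x ≡ c [MOD d] := by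
  intro h
  rcases Nat.eq_or_eq_add_or_eq_add_of_modEq h hxd (by omega) with rfl | rfl | h
  · have hg3 : g = 3 * k := by
      apply Nat.eq_of_mul_eq_mul_left (show 0 < d by omega)
      rw [← hcg, hxk]
      ring
    rw [hg3, Nat.prime_mul_iff] at hg
    have := Nat.prime_three.ne_one
    tauto
  · have hc3 : c = 3 := ((Nat.prime_dvd_prime_iff_eq Nat.prime_three hc).mp (by omega)).symm
    subst hc3
    have h13 : (d * g).Prime := by rw [← hcg]; norm_num
    rw [Nat.prime_mul_iff] at h13
    have := hg.ne_one
    omega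
  · omega

/-- There do not exist odd primes `a, b, c, d, e, f, g` satisfying `a² + a + 1 = 3·d·e`,
`b² + b + 1 = 3·d·f`, `c² + c + 1 = d·g`, `d ≥ e`, `d ≥ f`, `d ≥ g`, and `e ≠ f`. -/
theorem semi_linked_between_S22_and_S31 :
    ¬ ∃ a b c d e f g : ℕ,
      a.Prime ∧ b.Prime ∧ c.Prime ∧ d.Prime ∧ e.Prime ∧ f.Prime ∧ g.Prime ∧
      Odd a ∧ Odd b ∧ Odd c ∧ Odd d ∧ Odd e ∧ Odd f ∧ Odd g ∧
      a ^ 2 + a + 1 = 3 * d * e ∧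
      b ^ 2 + b + 1 = 3 * d * f ∧
      c ^ 2 + c + 1 = d * g ∧
      d ≥ e ∧ d ≥ f ∧ d ≥ g ∧ e ≠ f := by
  rintro ⟨a, b, c, d, e, f, g, -, -, hc, hd, he, hf, hg, -, -, -, -, -, -, -,
    hae, hbf, hcg, hed, hfd, hgd, hef⟩
  have hda : d ∣ a ^ 2 + a + 1 := ⟨3 * e, by rw [hae]; ring⟩
  have hdb : d ∣ b ^ 2 + b + 1 := ⟨3 * f, by rw [hbf]; ring⟩
  have hd3 : d % 3 = 1 := by
    refine (hd.eq_three_or_mod_three_eq_one_of_dvd_sq_add_add_one hda).resolve_left ?_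
    rintro rfl
    exact not_nine_dvd_sq_add_add_one a ⟨e, by linarith⟩
  have ha3 := mod_three_eq_one_of_three_dvd_sq_add_add_one ⟨d * e, by rw [hae]; ring⟩
  have hb3 := mod_three_eq_one_of_three_dvd_sq_add_add_one ⟨d * f, by rw [hbf]; ring⟩
  have ha := lt_two_mul_of_sq_add_add_one_eq hae hed
  have hb := lt_two_mul_of_sq_add_add_one_eq hbf hfd
  have hcd := lt_of_sq_add_add_one_eq hcg hgd
  rcases hd.modEq_or_modEq_or_modEq_of_dvd_sq_add_add_one hda hdb ⟨g, hcg⟩ with hab | hac | hbc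
  · rcases Nat.eq_or_eq_add_or_eq_add_of_modEq hab ha hb with rfl | rfl | rfl
    · exact hef (Nat.eq_of_mul_eq_mul_left (by omega) (hae.symm.trans hbf))
    all_goals omega
  · exact not_modEq_of_sq_add_add_one_eq hc hg he.ne_one ha3 hd3 ha hcd hae hcg hac
  · exact not_modEq_of_sq_add_add_one_eq hc hg hf.ne_one hb3 hd3 hb hcd hbf hcg hbc
end

section
/- There do not exist odd primes a, b, d, and e satisfying a² + a + 1 = 3·d·e, b² + b + 1 = d, and d ≥ e. -/
/-!
Both `a` and `b` are roots of `X² + X + 1` modulo the prime `d`, so `a ≡ b` or `a ≡ -b - 1`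
modulo `d`. The size conditions give `b < a < 2d`, which leaves only `a = b + d`, impossible
as `a`, `b`, `d` are odd, or `a + b + 1 ∈ {d, 2d}`; the parity of `a + b + 1` excludes `2d`, and
`a + b + 1 = d = b² + b + 1` makes `a = b²`, which is not prime.
-/

theorem eq_or_add_add_one_eq_zero_of_sq_add_add_one_eq_zero {R : Type*} [CommRing R]
    [NoZeroDivisors R] {x y : R} (hx : x ^ 2 + x + 1 = 0) (hy : y ^ 2 + y + 1 = 0) :
    x = y ∨ x + y + 1 = 0 := by
  have h : (x - y) * (x + y + 1) = 0 := by linear_combination hx - hy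
  exact (mul_eq_zero.1 h).imp_left sub_eq_zero.1

theorem Nat.eq_of_dvd_of_odd_of_lt_three_mul {n d : ℕ} (hdvd : d ∣ n) (hn : Odd n)
    (hlt : n < 3 * d) : n = d := by
  obtain ⟨k, rfl⟩ := hdvd
  have hk : Odd k := Nat.Odd.of_mul_right hn
  have hk3 : k < 3 := lt_of_mul_lt_mul_left (hlt.trans_eq (mul_comm 3 d)) (Nat.zero_le d)
  obtain ⟨j, rfl⟩ := hk
  obtain rfl : j = 0 := by omega
  simp

/-- There do not exist odd primes `a, b, d, e` satisfying `a² + a + 1 = 3·d·e`,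
`b² + b + 1 = d`, and `d ≥ e`. -/
theorem unique_between_S1_and_S31 :
    ¬ ∃ a b d e : ℕ,
      a.Prime ∧ b.Prime ∧ d.Prime ∧ e.Prime ∧
      Odd a ∧ Odd b ∧ Odd d ∧ Odd e ∧
      a ^ 2 + a + 1 = 3 * d * e ∧
      b ^ 2 + b + 1 = d ∧
      d ≥ e := by
  rintro ⟨a, b, d, e, ha, -, hd, he, hoa, hob, hod, -, ha_eq, hd_eq, hde⟩
  have hba : b < a := by nlinarith [he.one_le]
  have had : a < 2 * d := by nlinarith [Nat.mul_le_mul_left (3 * d) hde]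
  have hbd : b < d := by nlinarith
  have := Fact.mk hd
  have hroot_a : (a : ZMod d) ^ 2 + a + 1 = 0 := by
    exact_mod_cast (ZMod.natCast_eq_zero_iff _ d).2 ⟨3 * e, by rw [ha_eq]; ring⟩
  have hroot_b : (b : ZMod d) ^ 2 + b + 1 = 0 := by
    exact_mod_cast (ZMod.natCast_eq_zero_iff _ d).2 hd_eq.symm.dvd
  rcases eq_or_add_add_one_eq_zero_of_sq_add_add_one_eq_zero hroot_a hroot_b with h | h
  · have hdvd : d ∣ a - b :=
      (Nat.modEq_iff_dvd' hba.le).1 ((ZMod.natCast_eq_natCast_iff _ _ _).1 h).symm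
    have hsub : a - b = d := Nat.eq_of_dvd_of_lt_two_mul (by omega) hdvd (by omega)
    exact Nat.not_even_iff_odd.2 hod (hsub ▸ Nat.Odd.sub_odd hoa hob)
  · have hsum : a + b + 1 = d :=
      Nat.eq_of_dvd_of_odd_of_lt_three_mul ((ZMod.natCast_eq_zero_iff _ d).1 (by exact_mod_cast h))
        (hoa.add_odd hob).add_one (by omega)
    have hab : a = b ^ 2 := by linarith
    exact Nat.Prime.not_prime_pow le_rfl (hab ▸ ha)
end

section
/- Let a, b, d, and f be odd primes with d > f > 3 satisfying a² + a + 1 = d·f and b² + b + 1 = 3·d. Then there do not exist odd primes c and g with f > g such that c² + c + 1 = 3·f·g. -/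
/-!
Modulo the prime `d`, both `a` and `b` are roots of `X² + X + 1` lying below `d`, so either
`a = b`, which forces `f = 3`, or `a + b + 1 = d`; substituting the latter gives
`3 f = e² + e + 1` with `e = b - 3`. Now `c` and `e` are roots of `X² + X + 1` modulo the prime
`f` with `e < f` and `c < 2 f`, so `c` is one of `e`, `e + f`, `f - e - 1`, `2 f - e - 1`.
The first forces `g = 1`; the other three are impossible modulo `3`, because every `x` with
`x² + x + 1 = 3 n` satisfies `x ≡ n ≡ 1 (mod 3)`.
-/

lemma Prime.dvd_sub_or_dvd_add_add_one {R : Type*} [CommRing R] {p x y : R} (hp : Prime p)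
    (hx : p ∣ x ^ 2 + x + 1) (hy : p ∣ y ^ 2 + y + 1) : p ∣ x - y ∨ p ∣ x + y + 1 :=
  hp.dvd_or_dvd <| by convert dvd_sub hx hy using 1; ring

lemma Nat.eq_or_add_add_one_eq_of_dvd {p x y : ℕ} (hp : p.Prime) (hx : x < p) (hy : y < p)
    (hpx : p ∣ x ^ 2 + x + 1) (hpy : p ∣ y ^ 2 + y + 1) : x = y ∨ x + y + 1 = p := by
  have hpx' : (p : ℤ) ∣ (x : ℤ) ^ 2 + x + 1 := by exact_mod_cast hpx
  have hpy' : (p : ℤ) ∣ (y : ℤ) ^ 2 + y + 1 := by exact_mod_cast hpy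
  rcases (Nat.prime_iff_prime_int.mp hp).dvd_sub_or_dvd_add_add_one hpx' hpy' with h | h
  · exact Or.inl ((Nat.modEq_iff_dvd.mpr h).eq_of_lt_of_lt hy hx).symm
  · exact Or.inr (Nat.eq_of_dvd_of_lt_two_mul (by omega) (by exact_mod_cast h) (by omega))

lemma Nat.eq_or_eq_of_dvd_of_lt_two_mul {p x y : ℕ} (hp : p.Prime) (hx : x < 2 * p) (hy : y < p)
    (hpx : p ∣ x ^ 2 + x + 1) (hpy : p ∣ y ^ 2 + y + 1) :
    x = y ∨ x = y + p ∨ x + y + 1 = p ∨ x + y + 1 = 2 * p := by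
  have hmod : (x % p) ^ 2 + x % p + 1 ≡ x ^ 2 + x + 1 [MOD p] :=
    (((Nat.mod_modEq x p).pow 2).add (Nat.mod_modEq x p)).add_right 1
  have h := eq_or_add_add_one_eq_of_dvd hp (Nat.mod_lt x hp.pos) hy
    ((hmod.dvd_iff dvd_rfl).mpr hpx) hpy
  rcases lt_or_ge x p with hxp | hxp
  · rw [Nat.mod_eq_of_lt hxp] at h
    omega
  · rw [Nat.mod_eq_sub_mod hxp, Nat.mod_eq_of_lt (by omega)] at h
    omega

lemma Nat.mod_three_eq_one_of_three_mul_eq {x n : ℕ} (h : 3 * n = x ^ 2 + x + 1) :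
    x % 3 = 1 ∧ n % 3 = 1 := by
  obtain ⟨k, rfl | rfl | rfl⟩ : ∃ k, x = 3 * k ∨ x = 3 * k + 1 ∨ x = 3 * k + 2 :=
    ⟨x / 3, by omega⟩ <;> ring_nf at h <;> omega

lemma exists_three_mul_eq_sq_add_add_one_of_pair {a b d f : ℕ} (hd : d.Prime) (hfd : f < d)
    (hf3 : f ≠ 3) (h1 : a ^ 2 + a + 1 = d * f) (h2 : b ^ 2 + b + 1 = 3 * d) :
    ∃ e, 3 * f = e ^ 2 + e + 1 := by
  have hb3 := (Nat.mod_three_eq_one_of_three_mul_eq h2.symm).1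
  have hb1 : b ≠ 1 := by
    rintro rfl
    exact Nat.not_prime_one (by rwa [show d = 1 by norm_num at h2; omega] at hd)
  obtain ⟨e, rfl⟩ : ∃ e, b = e + 3 := ⟨b - 3, by omega⟩
  have had : a < d := by nlinarith
  have hbd : e + 3 < d := by nlinarith [hd.two_le]
  refine ⟨e, ?_⟩
  have h2' : (e + 3) ^ 2 + (e + 3) + 1 = d * 3 := h2.trans (mul_comm 3 d)
  rcases Nat.eq_or_add_add_one_eq_of_dvd hd had hbd ⟨f, h1⟩ ⟨3, h2'⟩ with rfl | rfl
  · exact absurd (Nat.eq_of_mul_eq_mul_left hd.pos (h1.symm.trans h2')) hf3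
  · apply Nat.eq_of_mul_eq_mul_left hd.pos
    have e1 : (a : ℤ) ^ 2 + a + 1 = (a + (e + 3) + 1) * f := by exact_mod_cast h1
    have e2 : ((e : ℤ) + 3) ^ 2 + (e + 3) + 1 = 3 * (a + (e + 3) + 1) := by exact_mod_cast h2
    have : ((a : ℤ) + (e + 3) + 1) * (3 * f) = (a + (e + 3) + 1) * (e ^ 2 + e + 1) := by
      linear_combination (-3 : ℤ) * e1 - ((a : ℤ) + e + 1) * e2
    exact_mod_cast this

lemma sq_add_add_one_ne_three_mul_mul {c e f g : ℕ} (hf : f.Prime) (he : 3 * f = e ^ 2 + e + 1)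
    (hg : g ≠ 1) (hgf : g < f) : c ^ 2 + c + 1 ≠ 3 * f * g := by
  intro hc
  have hef : e < f := by nlinarith [hf.two_le]
  have hcf : c < 2 * f := by nlinarith
  have he3 := Nat.mod_three_eq_one_of_three_mul_eq he
  have hc3 := (Nat.mod_three_eq_one_of_three_mul_eq (n := f * g) (by rw [hc]; ring)).1
  rcases Nat.eq_or_eq_of_dvd_of_lt_two_mul hf hcf hef ⟨3 * g, by rw [hc]; ring⟩
    ⟨3, he.symm.trans (mul_comm 3 f)⟩ with rfl | rfl | h | h
  · exact hg (Nat.eq_of_mul_eq_mul_left (by omega : 0 < 3 * f) (by rw [← hc, ← he, mul_one]))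
  all_goals omega

theorem small_factor_of_pair_not_S31_general (a b d f : ℕ)
    (hd : d.Prime) (hf : f.Prime)
    (hdf : d > f) (hf3 : f > 3)
    (h1 : a ^ 2 + a + 1 = d * f) (h2 : b ^ 2 + b + 1 = 3 * d) :
    ¬ ∃ c g : ℕ, c.Prime ∧ g.Prime ∧ Odd c ∧ Odd g ∧ f > g ∧
      c ^ 2 + c + 1 = 3 * f * g := by
  rintro ⟨c, g, -, hg, -, -, hgf, hc⟩
  obtain ⟨e, he⟩ := exists_three_mul_eq_sq_add_add_one_of_pair hd hdf hf3.ne' h1 h2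
  exact sq_add_add_one_ne_three_mul_mul hf he hg.one_lt.ne' hgf hc

/-- If `a, b, d, f` are odd primes with `d > f > 3`, `a² + a + 1 = d·f` and
`b² + b + 1 = 3·d`, then there do not exist odd primes `c` and `g` with `f > g`
such that `c² + c + 1 = 3·f·g`. -/
theorem small_factor_of_pair_not_S31 (a b d f : ℕ)
    (ha : a.Prime) (hb : b.Prime) (hd : d.Prime) (hf : f.Prime)
    (hao : Odd a) (hbo : Odd b) (hdo : Odd d) (hfo : Odd f)
    (hdf : d > f) (hf3 : f > 3)
    (h1 : a ^ 2 + a + 1 = d * f) (h2 : b ^ 2 + b + 1 = 3 * d) :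
    ¬ ∃ c g : ℕ, c.Prime ∧ g.Prime ∧ Odd c ∧ Odd g ∧ f > g ∧
      c ^ 2 + c + 1 = 3 * f * g :=
  small_factor_of_pair_not_S31_general a b d f hd hf hdf hf3 h1 h2
end
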